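/- Let K be a field, let n, p, d be positive natural numbers with n ≥ p, and let W be a d-dimensional K-subspace of A = K⟨x,y⟩ spanned by d nonempty words over x and y, each of length at most p. Then there is a K-subspace Y of A(n) whose dimension is at most (n+1)^d·(2p^2)·4^p such that for all sufficiently large natural numbers j, the two-sided ideal of A generated by all j-th powers of elements of W is contained in Σ_{k=0}^{∞} A(kn)·Y·A. -/

import Mathlib

open Module

noncomputable section

/-- The free associative algebra `K⟨x,y⟩` on two generators. -/
abbrev FA (K : Type*) [Field K] := FreeAlgebra K (Fin 2)

/-- The element of `K⟨x,y⟩` given by a word (a list of letters). -/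
def wordOf (K : Type*) [Field K] (l : List (Fin 2)) : FA K :=
  (l.map (FreeAlgebra.ι K)).prod

/-- `a` is a word of length `n` over the two generators. -/
def IsWord (K : Type*) [Field K] (n : ℕ) (a : FA K) : Prop :=
  ∃ l : List (Fin 2), l.length = n ∧ a = wordOf K l

/-- `A(n)`: the span of all words of length `n`. -/
def Aspan (K : Type*) [Field K] (n : ℕ) : Submodule K (FA K) :=
  Submodule.span K {a | IsWord K n a}

/-!
Write `y ∈ W` as `∑ αᵢ wᵢ`. Then `y ^ j = ∑ α^μ S(μ)` over the multisets `μ` of `j` indices,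
where `S(μ)` is the sum of the products of the `wᵢ` in all orders with content `μ`; so it
suffices to put `u * S(μ)` in the target for every word `u` once the total length of `μ` is at
least `2n`. Since `S(μ) = ∑ᵢ wᵢ S(μ - i) = ∑ᵢ S(μ - i) wᵢ`, one peels words off `S(μ)` on the
left until the prefix reaches a length `kn` (cutting the last word at that boundary), and then on
the right until what is left of the block, `c * S(ν) * e`, has length exactly `n`, with `|c| < p`
and `|e| ≤ p`. These blocks span `Y`: as `ν` has at most `n` elements it is determined by a count
vector in `{0, …, n}^d`, and there are fewer than `2^p` words `c` and `2^(p+1)` words `e`.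
-/

section SymProd

variable {ι M R : Type*} [DecidableEq ι]

theorem Multiset.sum_lists_toFinset_eq_sum_cons [AddCommMonoid M] (F : List ι → M)
    {μ : Multiset ι} (hμ : μ ≠ 0) :
    ∑ s ∈ μ.lists.toFinset, F s =
      ∑ i ∈ μ.toFinset, ∑ s ∈ (μ.erase i).lists.toFinset, F (i :: s) := by
  rw [Finset.sum_sigma']
  symm
  refine Finset.sum_bij (fun x _ => x.1 :: x.2) ?_ ?_ ?_ (fun _ _ => rfl)
  · rintro ⟨i, s⟩ h
    obtain ⟨hi, hs⟩ := Finset.mem_sigma.mp h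
    simp only [Multiset.mem_toFinset, Multiset.mem_lists_iff,
      Multiset.quot_mk_to_coe] at hi hs ⊢
    rw [← Multiset.cons_coe, ← hs, Multiset.cons_erase hi]
  · rintro ⟨i, s⟩ - ⟨i', s'⟩ - h
    obtain ⟨rfl, rfl⟩ := List.cons.inj h
    rfl
  · intro s hs
    simp only [Multiset.mem_toFinset, Multiset.mem_lists_iff, Multiset.quot_mk_to_coe] at hs
    subst hs
    cases s with
    | nil => exact absurd rfl hμ
    | cons a t => exact ⟨⟨a, t⟩, by simp, rfl⟩

theorem Multiset.sum_lists_toFinset_reverse [AddCommMonoid M] (F : List ι → M)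
    (μ : Multiset ι) :
    ∑ s ∈ μ.lists.toFinset, F s.reverse = ∑ s ∈ μ.lists.toFinset, F s :=
  Finset.sum_nbij' List.reverse List.reverse (by simp) (by simp) (by simp) (by simp)
    (fun _ _ => rfl)

theorem Multiset.sum_lists_toFinset_eq_sum_concat [AddCommMonoid M] (F : List ι → M)
    {μ : Multiset ι} (hμ : μ ≠ 0) :
    ∑ s ∈ μ.lists.toFinset, F s =
      ∑ i ∈ μ.toFinset, ∑ s ∈ (μ.erase i).lists.toFinset, F (s ++ [i]) := by
  rw [← Multiset.sum_lists_toFinset_reverse, Multiset.sum_lists_toFinset_eq_sum_cons _ hμ]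
  refine Finset.sum_congr rfl fun i _ => ?_
  rw [← Multiset.sum_lists_toFinset_reverse (fun s => F (s ++ [i]))]
  simp

variable [Semiring R] (w : ι → R)

/-- `toFinset` removes the repetitions of `μ.lists`, so every ordering of `μ` is counted once:
`symProd w μ` is the coefficient of `∏ αᵢ ^ μ.count i` in `(∑ i, αᵢ • w i) ^ card μ`. -/
def symProd (μ : Multiset ι) : R := ∑ s ∈ μ.lists.toFinset, (s.map w).prod

@[simp]
theorem symProd_zero : symProd w 0 = 1 := by
  simp [symProd, ← Multiset.coe_nil]

theorem symProd_eq_sum_mul {μ : Multiset ι} (hμ : μ ≠ 0) :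
    symProd w μ = ∑ i ∈ μ.toFinset, w i * symProd w (μ.erase i) := by
  simp only [symProd, Multiset.sum_lists_toFinset_eq_sum_cons _ hμ, Finset.mul_sum,
    List.map_cons, List.prod_cons]

theorem symProd_eq_sum_symProd_mul {μ : Multiset ι} (hμ : μ ≠ 0) :
    symProd w μ = ∑ i ∈ μ.toFinset, symProd w (μ.erase i) * w i := by
  simp only [symProd, Multiset.sum_lists_toFinset_eq_sum_concat _ hμ, Finset.sum_mul,
    List.map_append, List.prod_append, List.map_singleton, List.prod_singleton]

theorem sum_smul_pow_eq_sum_symProd {K : Type*} [CommSemiring K] [Algebra K R] [Fintype ι]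
    (α : ι → K) (j : ℕ) :
    (∑ i, α i • w i) ^ j = ∑ μ : Sym ι j, ((μ : Multiset ι).map α).prod • symProd w μ := by
  induction j with
  | zero => simp [Sym.eq_nil_of_card_zero]
  | succ j ih =>
    have hne (ν : Sym ι (j + 1)) : (ν : Multiset ι) ≠ 0 := by
      simp [← Multiset.card_pos]
    simp_rw [pow_succ', ih, Finset.sum_mul_sum, symProd_eq_sum_mul w (hne _), Finset.smul_sum]
    rw [← Finset.sum_product', Finset.sum_sigma']
    refine Finset.sum_bij (fun x _ => ⟨x.1 ::ₛ x.2, x.1⟩) (by simp) ?_ ?_ ?_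
    · rintro ⟨i, μ⟩ - ⟨i', μ'⟩ - h
      simp only [Sigma.mk.injEq, heq_eq_eq] at h
      obtain ⟨h, rfl⟩ := h
      rw [Sym.cons_inj_right] at h
      rw [h]
    · rintro ⟨ν, i⟩ h
      have hi : i ∈ ν := Multiset.mem_toFinset.mp (Finset.mem_sigma.mp h).2
      exact ⟨(i, ν.erase i hi), Finset.mem_univ _, by simp only [Sym.cons_erase hi]⟩
    · rintro ⟨i, μ⟩ -
      rw [Sym.coe_cons, Multiset.erase_cons_head, Multiset.map_cons, Multiset.prod_cons,
        smul_mul_smul_comm, mul_comm]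

end SymProd

theorem Submodule.mul_mem_mul_top {R A : Type*} [CommSemiring R] [Semiring A] [Algebra R A]
    {M : Submodule R A} {x : A} (hx : x ∈ M * ⊤) (a : A) : x * a ∈ M * ⊤ := by
  have := Submodule.mul_mem_mul hx (Submodule.mem_top (x := a) (R := R))
  rw [mul_assoc] at this
  exact SetLike.le_def.mp (mul_le_mul_right le_top M) this

section Words

variable {K : Type*} [Field K]

@[simp]
theorem wordOf_nil : wordOf K [] = 1 := rfl

theorem wordOf_append (a b : List (Fin 2)) : wordOf K (a ++ b) = wordOf K a * wordOf K b := by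
  simp [wordOf]

theorem wordOf_mem_Aspan (c : List (Fin 2)) : wordOf K c ∈ Aspan K c.length :=
  Submodule.subset_span ⟨c, rfl, rfl⟩

theorem mul_mem_Aspan {a b : ℕ} {x y : FA K} (hx : x ∈ Aspan K a) (hy : y ∈ Aspan K b) :
    x * y ∈ Aspan K (a + b) := by
  have key : Aspan K a * Aspan K b ≤ Aspan K (a + b) := by
    rw [Aspan, Aspan, Submodule.span_mul_span, Submodule.span_le]
    rintro _ ⟨_, ⟨c, rfl, rfl⟩, _, ⟨e, rfl, rfl⟩, rfl⟩
    simpa [wordOf_append] using wordOf_mem_Aspan (K := K) (c ++ e)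
  exact key (Submodule.mul_mem_mul hx hy)

theorem span_range_wordOf : Submodule.span K (Set.range (wordOf K)) = ⊤ := by
  rw [eq_top_iff, ← (FreeAlgebra.basisFreeMonoid K (Fin 2)).span_eq]
  refine Submodule.span_mono ?_
  rintro _ ⟨m, rfl⟩
  exact ⟨m.toList, by simp [wordOf, FreeAlgebra.basisFreeMonoid,
    FreeAlgebra.equivMonoidAlgebraFreeMonoid, MonoidAlgebra.lift_single, FreeMonoid.lift_apply]⟩

theorem mul_mem_of_forall_wordOf_mul_mem {P : Submodule K (FA K)} {x : FA K}
    (h : ∀ c, wordOf K c * x ∈ P) (u : FA K) : u * x ∈ P := by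
  have hu : u ∈ Submodule.span K (Set.range (wordOf K)) := by
    rw [span_range_wordOf]; trivial
  refine (Submodule.span_le (p := P.comap (LinearMap.mulRight K x))).mpr ?_ hu
  rintro _ ⟨c, rfl⟩
  exact h c

variable {ι : Type*} (l : ι → List (Fin 2))

def totalLength (μ : Multiset ι) : ℕ := (μ.map fun i => (l i).length).sum

@[simp]
theorem totalLength_zero : totalLength l 0 = 0 := rfl

theorem totalLength_eq_add_erase [DecidableEq ι] {μ : Multiset ι} {i : ι} (hi : i ∈ μ) :
    totalLength l μ = (l i).length + totalLength l (μ.erase i) := by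
  conv_lhs => rw [← Multiset.cons_erase hi]
  simp [totalLength]

theorem card_le_totalLength (hne : ∀ i, l i ≠ []) (μ : Multiset ι) :
    Multiset.card μ ≤ totalLength l μ := by
  simpa [totalLength] using Multiset.card_nsmul_le_sum (s := μ.map fun i => (l i).length) (a := 1)
    (by simpa [Nat.one_le_iff_ne_zero] using fun i _ => hne i)

theorem symProd_wordOf_mem_Aspan [DecidableEq ι] (μ : Multiset ι) :
    symProd (wordOf K ∘ l) μ ∈ Aspan K (totalLength l μ) := by
  refine Submodule.sum_mem _ fun s hs => ?_
  rw [Multiset.mem_toFinset, Multiset.mem_lists_iff, Multiset.quot_mk_to_coe] at hs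
  subst hs
  induction s with
  | nil => exact wordOf_mem_Aspan []
  | cons i s ih =>
    simpa [totalLength] using mul_mem_Aspan (wordOf_mem_Aspan (l i)) ih

end Words

def Multiset.ofCounts {ι : Type*} [Fintype ι] {N : ℕ} (m : ι → Fin N) : Multiset ι :=
  ∑ i, (m i : ℕ) • {i}

theorem Multiset.ofCounts_count {ι : Type*} [Fintype ι] [DecidableEq ι] {N : ℕ}
    (ν : Multiset ι) (h : ∀ i, ν.count i < N) :
    Multiset.ofCounts (fun i => ⟨ν.count i, h i⟩) = ν := by
  ext i
  simp [Multiset.ofCounts, Multiset.count_sum', Multiset.count_singleton]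

theorem card_sigma_vector_le (m : ℕ) :
    Fintype.card (Σ k : Fin m, List.Vector (Fin 2) k) ≤ 2 ^ m := by
  simpa [Fintype.card_sigma, card_vector, Fin.sum_univ_eq_sum_range] using
    (Nat.geomSum_lt le_rfl (s := Finset.range m) (n := m) (by simp)).le

section Blocks

variable (K : Type*) [Field K] {ι : Type*} [DecidableEq ι] (l : ι → List (Fin 2)) (n p : ℕ)

def blockSpan : Submodule K (FA K) :=
  Submodule.span K {a | ∃ (c e : List (Fin 2)) (ν : Multiset ι), c.length < p ∧ e.length ≤ p ∧
    c.length + totalLength l ν + e.length = n ∧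
    a = wordOf K c * symProd (wordOf K ∘ l) ν * wordOf K e}

theorem blockSpan_le_Aspan : blockSpan K l n p ≤ Aspan K n := by
  rw [blockSpan, Submodule.span_le]
  rintro _ ⟨c, e, ν, -, -, hn, rfl⟩
  exact hn ▸ mul_mem_Aspan (mul_mem_Aspan (wordOf_mem_Aspan c) (symProd_wordOf_mem_Aspan l ν))
    (wordOf_mem_Aspan e)

theorem finrank_blockSpan_le [Fintype ι] (hne : ∀ i, l i ≠ []) :
    finrank K (blockSpan K l n p) ≤ 2 ^ p * 2 ^ (p + 1) * (n + 1) ^ Fintype.card ι := by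
  let F : (Σ k : Fin p, List.Vector (Fin 2) k) × (Σ k : Fin (p + 1), List.Vector (Fin 2) k) ×
      (ι → Fin (n + 1)) → FA K := fun x =>
    wordOf K x.1.2.toList * symProd (wordOf K ∘ l) (Multiset.ofCounts x.2.2) *
      wordOf K x.2.1.2.toList
  have hgens : blockSpan K l n p ≤ Submodule.span K (Set.range F) := by
    refine Submodule.span_mono ?_
    rintro _ ⟨c, e, ν, hc, he, hn, rfl⟩
    have hcount (i : ι) : ν.count i < n + 1 := by
      have := (Multiset.count_le_card i ν).trans (card_le_totalLength l hne ν)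
      omega
    refine ⟨(⟨⟨c.length, hc⟩, ⟨c, rfl⟩⟩, ⟨⟨e.length, by omega⟩, ⟨e, rfl⟩⟩,
      fun i => ⟨ν.count i, hcount i⟩), ?_⟩
    simp only [F, Multiset.ofCounts_count, List.Vector.toList_mk]
  have : Module.Finite K (Submodule.span K (Set.range F)) :=
    Module.Finite.span_of_finite K (Set.finite_range F)
  calc finrank K (blockSpan K l n p) ≤ finrank K (Submodule.span K (Set.range F)) :=
        Submodule.finrank_mono hgens
    _ ≤ _ := finrank_range_le_card F
    _ ≤ 2 ^ p * 2 ^ (p + 1) * (n + 1) ^ Fintype.card ι := by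
      simp only [Fintype.card_prod, Fintype.card_fun, Fintype.card_fin, ← mul_assoc]
      gcongr <;> exact card_sigma_vector_le _

end Blocks

section Covering

variable {K : Type*} [Field K] {ι : Type*} [DecidableEq ι] {l : ι → List (Fin 2)} {n p : ℕ}

theorem wordOf_mul_symProd_mem_blockSpan_mul_top (hlen : ∀ i, (l i).length ≤ p)
    {c : List (Fin 2)} (hc : c.length < p) (μ : Multiset ι)
    (hμ : n ≤ c.length + totalLength l μ) :
    wordOf K c * symProd (wordOf K ∘ l) μ ∈ blockSpan K l n p * ⊤ := by
  induction μ using Multiset.strongInductionOn with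
  | ih μ ih =>
  by_cases h0 : μ = 0
  · subst h0
    rw [totalLength_zero, add_zero] at hμ
    rw [symProd_zero, mul_one, ← List.take_append_drop n c, wordOf_append]
    refine Submodule.mul_mem_mul (Submodule.subset_span
      ⟨c.take n, [], 0, by rw [List.length_take]; omega, by simp,
        by simp only [List.length_take, totalLength_zero, List.length_nil]; omega, by simp⟩)
      Submodule.mem_top
  rw [symProd_eq_sum_symProd_mul _ h0, Finset.mul_sum]
  refine Submodule.sum_mem _ fun i hi => ?_
  have hi : i ∈ μ := Multiset.mem_toFinset.mp hi
  have htotal := totalLength_eq_add_erase l hi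
  rw [← mul_assoc]
  by_cases hfit : n ≤ c.length + totalLength l (μ.erase i)
  · exact Submodule.mul_mem_mul_top (ih _ (Multiset.erase_lt.mpr hi) hfit) _
  · set b := n - c.length - totalLength l (μ.erase i)
    have hb : ((l i).take b).length = b := by rw [List.length_take]; omega
    rw [Function.comp_apply, ← List.take_append_drop b (l i), wordOf_append, ← mul_assoc]
    refine Submodule.mul_mem_mul (Submodule.subset_span
      ⟨c, (l i).take b, μ.erase i, hc, ?_, ?_, rfl⟩) Submodule.mem_top
    · have := hlen i; omega
    · omega

theorem wordOf_mul_mem_iSup {Y : Submodule K (FA K)} {u : List (Fin 2)} {k : ℕ}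
    (hu : u.length = k * n) {z : FA K} (hz : z ∈ Y * ⊤) :
    wordOf K u * z ∈ ⨆ k : ℕ, Aspan K (k * n) * Y * ⊤ := by
  refine Submodule.mem_iSup_of_mem k ?_
  rw [mul_assoc]
  exact Submodule.mul_mem_mul (hu ▸ wordOf_mem_Aspan u) hz

theorem wordOf_mul_symProd_mem_iSup_of_add_eq (hp : 0 < p) (hlen : ∀ i, (l i).length ≤ p)
    (μ : Multiset ι) {u : List (Fin 2)} {k r : ℕ} (hu : u.length + r = k * n)
    (hμ : n + r ≤ totalLength l μ) :
    wordOf K u * symProd (wordOf K ∘ l) μ ∈ ⨆ k : ℕ, Aspan K (k * n) * blockSpan K l n p * ⊤ := by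
  induction μ using Multiset.strongInductionOn generalizing u r with
  | ih μ ih =>
  by_cases hr : r = 0
  · subst hr
    refine wordOf_mul_mem_iSup hu ?_
    simpa using wordOf_mul_symProd_mem_blockSpan_mul_top (K := K) hlen (c := []) hp μ
      (by simpa using le_of_add_le_left hμ)
  have h0 : μ ≠ 0 := by rintro rfl; rw [totalLength_zero] at hμ; omega
  rw [symProd_eq_sum_mul _ h0, Finset.mul_sum]
  refine Submodule.sum_mem _ fun i hi => ?_
  have hi : i ∈ μ := Multiset.mem_toFinset.mp hi
  have htotal := totalLength_eq_add_erase l hi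
  rw [← mul_assoc, Function.comp_apply]
  by_cases hfit : (l i).length ≤ r
  · rw [← wordOf_append]
    exact ih _ (Multiset.erase_lt.mpr hi) (r := r - (l i).length)
      (by rw [List.length_append]; omega) (by omega)
  · rw [← List.take_append_drop r (l i), wordOf_append, ← mul_assoc, ← wordOf_append, mul_assoc]
    refine wordOf_mul_mem_iSup (k := k) (by rw [List.length_append, List.length_take]; omega) ?_
    have hli := hlen i
    exact wordOf_mul_symProd_mem_blockSpan_mul_top hlen (by rw [List.length_drop]; omega) _
      (by rw [List.length_drop]; omega)

theorem wordOf_mul_symProd_mem_iSup (hn : 0 < n) (hp : 0 < p) (hlen : ∀ i, (l i).length ≤ p)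
    (u : List (Fin 2)) {μ : Multiset ι} (hμ : 2 * n ≤ totalLength l μ) :
    wordOf K u * symProd (wordOf K ∘ l) μ ∈ ⨆ k : ℕ, Aspan K (k * n) * blockSpan K l n p * ⊤ := by
  have hk := Nat.lt_div_mul_add (a := u.length) hn
  have hk' := Nat.div_mul_le_self u.length n
  refine wordOf_mul_symProd_mem_iSup_of_add_eq hp hlen μ
    (k := u.length / n + 1) (r := (u.length / n + 1) * n - u.length) ?_ ?_ <;>
  · rw [add_mul, one_mul]; omega

end Covering

theorem lemma_4_1_general {K : Type*} [Field K] (n p d : ℕ)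
    (hn : 0 < n) (hp : 0 < p)
    (w : Fin d → FA K)
    (hword : ∀ i, ∃ l : List (Fin 2), l ≠ [] ∧ l.length ≤ p ∧ w i = wordOf K l) :
    ∃ Y : Submodule K (FA K), Y ≤ Aspan K n ∧
      finrank K Y ≤ (n + 1) ^ d * (2 * p ^ 2) * 4 ^ p ∧
      ∃ N : ℕ, ∀ j ≥ N,
        Submodule.span K {a : FA K | ∃ u v : FA K,
            ∃ y ∈ Submodule.span K (Set.range w), a = u * y ^ j * v}
          ≤ ⨆ k : ℕ, Aspan K (k * n) * Y * (⊤ : Submodule K (FA K)) := by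
  choose l hne hlen hw using hword
  obtain rfl : w = wordOf K ∘ l := funext hw
  refine ⟨blockSpan K l n p, blockSpan_le_Aspan K l n p, ?_, 2 * n, fun j hj => ?_⟩
  · calc finrank K (blockSpan K l n p) ≤ 2 ^ p * 2 ^ (p + 1) * (n + 1) ^ d := by
          simpa only [Fintype.card_fin] using finrank_blockSpan_le K l n p hne
      _ = (n + 1) ^ d * 2 * 4 ^ p := by
          rw [show (4 : ℕ) ^ p = 2 ^ p * 2 ^ p by rw [← mul_pow]; rfl]; ring
      _ ≤ (n + 1) ^ d * (2 * p ^ 2) * 4 ^ p := by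
          gcongr; nlinarith
  rw [Submodule.span_le]
  rintro _ ⟨u, v, y, hy, rfl⟩
  rw [← Submodule.iSup_mul]
  refine Submodule.mul_mem_mul_top ?_ v
  rw [Submodule.iSup_mul]
  obtain ⟨α, rfl⟩ := (Submodule.mem_span_range_iff_exists_fun K).mp hy
  rw [sum_smul_pow_eq_sum_symProd, Finset.mul_sum]
  refine Submodule.sum_mem _ fun μ _ => ?_
  rw [mul_smul_comm]
  refine Submodule.smul_mem _ _ (mul_mem_of_forall_wordOf_mul_mem (fun c => ?_) u)
  refine wordOf_mul_symProd_mem_iSup hn hp hlen c ?_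
  have := card_le_totalLength l hne μ
  rw [Sym.card_coe] at this
  omega

/-- **Lemma 4.1.** Let `W` be a `d`-dimensional subspace of `K⟨x,y⟩` spanned by `d`
nonempty words of length at most `p`. Then there is a subspace `Y ⊆ A(n)` of dimension
at most `(n+1)^d·(2p²)·4^p` such that for all sufficiently large `j`, the two-sided
ideal generated by all `j`-th powers of elements of `W` is contained in
`Σ_{k=0}^∞ A(kn)·Y·A`. -/
theorem lemma_4_1 {K : Type*} [Field K] (n p d : ℕ)
    (hn : 0 < n) (hp : 0 < p) (hd : 0 < d) (hpn : p ≤ n)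
    (w : Fin d → FA K)
    (hword : ∀ i, ∃ l : List (Fin 2), l ≠ [] ∧ l.length ≤ p ∧ w i = wordOf K l)
    (hind : LinearIndependent K w) :
    ∃ Y : Submodule K (FA K), Y ≤ Aspan K n ∧
      finrank K Y ≤ (n + 1) ^ d * (2 * p ^ 2) * 4 ^ p ∧
      ∃ N : ℕ, ∀ j ≥ N,
        Submodule.span K {a : FA K | ∃ u v : FA K,
            ∃ y ∈ Submodule.span K (Set.range w), a = u * y ^ j * v}
          ≤ ⨆ k : ℕ, Aspan K (k * n) * Y * (⊤ : Submodule K (FA K)) :=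
  lemma_4_1_general n p d hn hp w hword
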